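/- arXiv:1501.02606 — 4 statements merged into one kernel-verified Lean document; each statement's English description precedes it below -/
import Mathlib

section
/- For every sequence x = (x_n)_{n≥2} with x_n ∈ {1,…,n} for each n, the set M_x equipped with the restriction d_x of d is a proper metric space, i.e., every closed ball of (M_x, d_x) is compact. -/
noncomputable section

/-- The plane `ℝ²`, to be equipped with the tree metric. -/
structure TreePlane : Type where
  u : ℝ
  v : ℝ

namespace TreePlane

/-- The tree distance on `ℝ²`. -/
def tdist (p q : TreePlane) : ℝ :=
  if p.u = q.u then |p.v - q.v| else |p.v| + |p.u - q.u| + |q.v|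

theorem tdist_self (p : TreePlane) : tdist p p = 0 := by simp [tdist]

theorem tdist_comm (p q : TreePlane) : tdist p q = tdist q p := by
  unfold tdist
  rcases eq_or_ne p.u q.u with h | h
  · simp [h, abs_sub_comm]
  · simp [h, h.symm, abs_sub_comm]
    ring

theorem tdist_triangle (p q r : TreePlane) : tdist p r ≤ tdist p q + tdist q r := by
  unfold tdist
  rcases eq_or_ne p.u q.u with e1 | e1 <;> rcases eq_or_ne q.u r.u with e2 | e2 <;>
      rcases eq_or_ne p.u r.u with e3 | e3
  · rw [if_pos e1, if_pos e2, if_pos e3]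
    exact abs_sub_le _ _ _
  · exact absurd (e1.trans e2) e3
  · exact absurd (e1.symm.trans e3) e2
  · rw [if_pos e1, if_neg e2, if_neg e3, e1]
    have h1 : |p.v| ≤ |p.v - q.v| + |q.v| := by
      calc |p.v| = |p.v - q.v + q.v| := by ring_nf
        _ ≤ |p.v - q.v| + |q.v| := abs_add_le _ _
    linarith
  · exact absurd (e3.trans e2.symm) e1
  · rw [if_neg e1, if_pos e2, if_neg e3, e2]
    have h1 : |r.v| ≤ |q.v - r.v| + |q.v| := by
      calc |r.v| = |r.v - q.v + q.v| := by ring_nf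
        _ ≤ |r.v - q.v| + |q.v| := abs_add_le _ _
        _ = |q.v - r.v| + |q.v| := by rw [abs_sub_comm]
    linarith
  · rw [if_neg e1, if_neg e2, if_pos e3]
    have h1 : |p.v - r.v| ≤ |p.v| + |r.v| := abs_sub _ _
    have h2 := abs_nonneg (p.u - q.u)
    have h3 := abs_nonneg (q.u - r.u)
    have h4 := abs_nonneg q.v
    linarith
  · rw [if_neg e1, if_neg e2, if_neg e3]
    have h1 : |p.u - r.u| ≤ |p.u - q.u| + |q.u - r.u| := abs_sub_le _ _ _
    have h2 := abs_nonneg q.v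
    linarith

theorem tdist_eq_zero {p q : TreePlane} (h : tdist p q = 0) : p = q := by
  unfold tdist at h
  rcases eq_or_ne p.u q.u with e | e
  · rw [if_pos e] at h
    have hv : p.v = q.v := by
      have := abs_eq_zero.mp h
      linarith
    cases p; cases q; simp_all
  · rw [if_neg e] at h
    exfalso
    have h1 := abs_nonneg p.v
    have h2 := abs_nonneg q.v
    have h3 : 0 < |p.u - q.u| := abs_pos.mpr (sub_ne_zero.mpr e)
    linarith

noncomputable instance : MetricSpace TreePlane where
  dist := tdist
  dist_self := tdist_self
  dist_comm := tdist_comm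
  dist_triangle := tdist_triangle
  eq_of_dist_eq_zero := tdist_eq_zero

theorem dist_def (p q : TreePlane) : dist p q = tdist p q := rfl

end TreePlane

open TreePlane

/-- `∑_{i=2}^n e^{i²}`. -/
def expSum (n : ℕ) : ℝ := ∑ i ∈ Finset.Icc 2 n, Real.exp ((i : ℝ) ^ 2)

/-- `P⁺_{x,n} = (∑_{i=2}^n e^{i²}, e^{x_n})`. -/
def Pp (x : ℕ → ℕ) (n : ℕ) : TreePlane := ⟨expSum n, Real.exp (x n)⟩

/-- `P⁻_{x,n} = (∑_{i=2}^n e^{i²}, −e^{x_n})`. -/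
def Pm (x : ℕ → ℕ) (n : ℕ) : TreePlane := ⟨expSum n, -Real.exp (x n)⟩

/-- `M_x = ⋃_{n≥2} {P⁺_{x,n}, P⁻_{x,n}}`, as a subspace of `(ℝ², treeDist)`. -/
def Mset (x : ℕ → ℕ) : Set TreePlane :=
  ⋃ n ∈ {m : ℕ | 2 ≤ m}, ({Pp x n, Pm x n} : Set TreePlane)

/-- `x = (x_n)_{n≥2}` is a sequence with `x_n ∈ {1,…,n}`. -/
def SeqOK (x : ℕ → ℕ) : Prop := ∀ n, 2 ≤ n → 1 ≤ x n ∧ x n ≤ n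

/-!
The tree distance dominates the distance of first coordinates, and the first coordinate
`∑_{i=2}^n e^{i²}` of the points of `M_{x,n}` is at least `n`. Hence a ball of radius `r` about
`p` only meets the finitely many `M_{x,n}` with `n ≤ p.u + r`: closed balls of `M_x` are finite,
hence compact.
-/

lemma TreePlane.abs_u_sub_le_dist (p q : TreePlane) : |p.u - q.u| ≤ dist p q := by
  rw [dist_def, tdist]
  split_ifs with h
  · simp [h]
  · linarith [abs_nonneg p.v, abs_nonneg q.v]

lemma natCast_le_expSum {n : ℕ} (hn : 2 ≤ n) : (n : ℝ) ≤ expSum n := by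
  have hn_le_sq : (n : ℝ) ≤ (n : ℝ) ^ 2 := by
    have : (1 : ℝ) ≤ n := by exact_mod_cast (by omega : 1 ≤ n)
    nlinarith
  calc (n : ℝ) ≤ (n : ℝ) ^ 2 + 1 := by linarith
    _ ≤ Real.exp ((n : ℝ) ^ 2) := Real.add_one_le_exp _
    _ ≤ expSum n :=
      Finset.single_le_sum (f := fun i : ℕ => Real.exp ((i : ℝ) ^ 2))
        (fun i _ => (Real.exp_pos _).le) (Finset.mem_Icc.mpr ⟨hn, le_rfl⟩)

@[simp] lemma Pp_u (x : ℕ → ℕ) (n : ℕ) : (Pp x n).u = expSum n := rfl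

@[simp] lemma Pm_u (x : ℕ → ℕ) (n : ℕ) : (Pm x n).u = expSum n := rfl

lemma finite_Mset_inter_u_le (x : ℕ → ℕ) (C : ℝ) : {q ∈ Mset x | q.u ≤ C}.Finite := by
  refine ((Finset.Icc 2 ⌈C⌉₊).finite_toSet.biUnion
    fun n _ => ((Set.finite_singleton (Pm x n)).insert (Pp x n))).subset ?_
  rintro q ⟨hq, hqC⟩
  simp only [Mset, Set.mem_iUnion] at hq
  obtain ⟨n, hn, hqn⟩ := hq
  have hqu : q.u = expSum n := by
    rcases hqn with rfl | rfl <;> simp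
  have hnC : (n : ℝ) ≤ ⌈C⌉₊ := calc
    (n : ℝ) ≤ expSum n := natCast_le_expSum hn
    _ ≤ C := hqu ▸ hqC
    _ ≤ ⌈C⌉₊ := Nat.le_ceil C
  exact Set.mem_biUnion (Finset.mem_Icc.mpr ⟨hn, by exact_mod_cast hnC⟩) hqn

theorem Mset_proper_general (x : ℕ → ℕ) :
    ∀ (p : ↥(Mset x)) (r : ℝ), IsCompact (Metric.closedBall p r) := by
  intro p r
  have hball : Metric.closedBall p r ⊆
      Subtype.val ⁻¹' {q ∈ Mset x | q.u ≤ (p : TreePlane).u + r} := by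
    intro q hq
    have hu : (q : TreePlane).u - (p : TreePlane).u ≤ dist q p :=
      (le_abs_self _).trans ((q : TreePlane).abs_u_sub_le_dist p)
    exact ⟨q.2, by linarith [Metric.mem_closedBall.mp hq]⟩
  exact (((finite_Mset_inter_u_le x _).preimage Subtype.val_injective.injOn).subset
    hball).isCompact

/-- `(M_x, d_x)` is a proper metric space: every closed ball of the metric
subspace `M_x` of `(ℝ², treeDist)` is compact. -/
theorem Mset_proper (x : ℕ → ℕ) (hx : SeqOK x) :
    ∀ (p : ↥(Mset x)) (r : ℝ), IsCompact (Metric.closedBall p r) :=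
  Mset_proper_general x
end
end

section
/- Let M, N, P be metric spaces, with distinguished points x ∈ M, y ∈ N, z ∈ P, let R, r, s > 0, and set S = R + 2·max{r, s}. Suppose there are admissible pseudometrics d on M ⊔ P and d̄ on N ⊔ P such that d(x,z) < r, H_{d,S}(M,x;P,z) < r, d̄(y,z) < s, and H_{d̄,S}(N,y;P,z) < s. Then there is an admissible pseudometric d̂ on M ⊔ N such that d̂(x,y) < r + s and H_{d̂,R}(M,x;N,y) < r + s. -/
noncomputable section

/-- A pseudometric on the disjoint union `α ⊔ β` of two metric spaces is admissible
if it is symmetric, vanishes on the diagonal, satisfies the triangle inequality,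
and restricts to the given metrics on `α` and on `β`. -/
def Admissible {α β : Type*} [MetricSpace α] [MetricSpace β]
    (d : α ⊕ β → α ⊕ β → ℝ) : Prop :=
  (∀ a b, d a b = d b a) ∧ (∀ a, d a a = 0) ∧
  (∀ a b c, d a c ≤ d a b + d b c) ∧
  (∀ a b : α, d (Sum.inl a) (Sum.inl b) = dist a b) ∧
  (∀ a b : β, d (Sum.inr a) (Sum.inr b) = dist a b)

/-- `H_{d,R}(α,x;β,y) = max { sup_{u ∈ B_α(x,R)} d(u,β), sup_{v ∈ B_β(y,R)} d(v,α) }`,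
for a pseudometric `d` on `α ⊔ β`. -/
noncomputable def HR {α β : Type*} [MetricSpace α] [MetricSpace β]
    (d : α ⊕ β → α ⊕ β → ℝ) (x : α) (y : β) (R : ℝ) : ℝ :=
  max (⨆ u : Metric.ball x R, ⨅ v : β, d (Sum.inl (u : α)) (Sum.inr v))
      (⨆ v : Metric.ball y R, ⨅ u : α, d (Sum.inr (v : β)) (Sum.inl u))

lemma adm_nonneg {α β : Type*} [MetricSpace α] [MetricSpace β]
    {d : α ⊕ β → α ⊕ β → ℝ} (hd : Admissible d) (a b : α ⊕ β) : 0 ≤ d a b := by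
  obtain ⟨hsymm, hzero, htri, -, -⟩ := hd
  nlinarith [htri a b a, hzero a, hsymm a b]

lemma bdd_below_range {ι : Sort*} {f : ι → ℝ} (h : ∀ i, 0 ≤ f i) :
    BddBelow (Set.range f) :=
  ⟨0, by rintro y ⟨i, rfl⟩; exact h i⟩

lemma lemA {α β : Type*} [MetricSpace α] [MetricSpace β] [Nonempty β]
    {d : α ⊕ β → α ⊕ β → ℝ} (hd : Admissible d) (x : α) (z : β) (S : ℝ)
    (u : α) (hu : u ∈ Metric.ball x S) :
    (⨅ w : β, d (Sum.inl u) (Sum.inr w)) ≤ HR d x z S := by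
  refine le_trans (le_ciSup (f := fun u : Metric.ball x S => ⨅ w : β, d (Sum.inl (u : α)) (Sum.inr w)) ?_ (⟨u, hu⟩ : Metric.ball x S)) (le_max_left _ _)
  refine ⟨S + d (Sum.inl x) (Sum.inr z), ?_⟩
  rintro t ⟨⟨v, hv⟩, rfl⟩
  have h1 : (⨅ w : β, d (Sum.inl v) (Sum.inr w)) ≤ d (Sum.inl v) (Sum.inr z) :=
    ciInf_le (bdd_below_range fun w => adm_nonneg hd _ _) z
  have h2 := hd.2.2.1 (Sum.inl v) (Sum.inl x) (Sum.inr z)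
  have h3 := hd.2.2.2.1 v x
  have h4 : dist v x < S := Metric.mem_ball.1 hv
  simp only [Set.mem_setOf_eq] at *
  linarith

lemma lemB {α β : Type*} [MetricSpace α] [MetricSpace β] [Nonempty α]
    {d : α ⊕ β → α ⊕ β → ℝ} (hd : Admissible d) (x : α) (z : β) (S : ℝ)
    (w : β) (hw : w ∈ Metric.ball z S) :
    (⨅ u : α, d (Sum.inr w) (Sum.inl u)) ≤ HR d x z S := by
  refine le_trans (le_ciSup (f := fun v : Metric.ball z S => ⨅ u : α, d (Sum.inr (v : β)) (Sum.inl u)) ?_ (⟨w, hw⟩ : Metric.ball z S)) (le_max_right _ _)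
  refine ⟨S + d (Sum.inl x) (Sum.inr z), ?_⟩
  rintro t ⟨⟨v, hv⟩, rfl⟩
  have h1 : (⨅ u : α, d (Sum.inr v) (Sum.inl u)) ≤ d (Sum.inr v) (Sum.inl x) :=
    ciInf_le (bdd_below_range fun u => adm_nonneg hd _ _) x
  have h2 := hd.2.2.1 (Sum.inr v) (Sum.inr z) (Sum.inl x)
  have h3 := hd.2.2.2.2 v z
  have h4 : dist v z < S := Metric.mem_ball.1 hv
  have h5 := hd.1 (Sum.inr z) (Sum.inl x)
  have h6 := hd.1 (Sum.inl x) (Sum.inr z)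
  linarith

noncomputable def Ehat {M N P : Type*}
    (d : M ⊕ P → M ⊕ P → ℝ) (dbar : N ⊕ P → N ⊕ P → ℝ) (a : M) (b : N) : ℝ :=
  ⨅ w : P, (d (Sum.inl a) (Sum.inr w) + dbar (Sum.inr w) (Sum.inl b))

noncomputable def Dhat {M N P : Type*} [MetricSpace M] [MetricSpace N]
    (d : M ⊕ P → M ⊕ P → ℝ) (dbar : N ⊕ P → N ⊕ P → ℝ) : M ⊕ N → M ⊕ N → ℝ
  | Sum.inl a, Sum.inl b => dist a b
  | Sum.inl a, Sum.inr b => Ehat d dbar a b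
  | Sum.inr b, Sum.inl a => Ehat d dbar a b
  | Sum.inr a, Sum.inr b => dist a b

section EhatProps
variable {M N P : Type*} [MetricSpace M] [MetricSpace N] [MetricSpace P] [Nonempty P]
  {d : M ⊕ P → M ⊕ P → ℝ} {dbar : N ⊕ P → N ⊕ P → ℝ}
  (hd : Admissible d) (hdbar : Admissible dbar)

include hd hdbar

set_option linter.unusedSectionVars false

lemma Ehat_nonneg (a : M) (b : N) : 0 ≤ Ehat d dbar a b :=
  le_ciInf fun w => add_nonneg (adm_nonneg hd _ _) (adm_nonneg hdbar _ _)

lemma Ehat_le (a : M) (b : N) (w : P) :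
    Ehat d dbar a b ≤ d (Sum.inl a) (Sum.inr w) + dbar (Sum.inr w) (Sum.inl b) :=
  ciInf_le (bdd_below_range fun w =>
    add_nonneg (adm_nonneg hd _ _) (adm_nonneg hdbar _ _)) w

lemma Ehat_shiftL (a a' : M) (b : N) :
    Ehat d dbar a b ≤ dist a a' + Ehat d dbar a' b := by
  have h1 : Ehat d dbar a b - dist a a' ≤ Ehat d dbar a' b := by
    refine le_ciInf fun w => ?_
    have h2 := Ehat_le hd hdbar a b w
    have h3 := hd.2.2.1 (Sum.inl a) (Sum.inl a') (Sum.inr w)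
    have h4 := hd.2.2.2.1 a a'
    linarith
  linarith

lemma Ehat_shiftR (a : M) (b b' : N) :
    Ehat d dbar a b ≤ Ehat d dbar a b' + dist b' b := by
  have h1 : Ehat d dbar a b - dist b' b ≤ Ehat d dbar a b' := by
    refine le_ciInf fun w => ?_
    have h2 := Ehat_le hd hdbar a b w
    have h3 := hdbar.2.2.1 (Sum.inr w) (Sum.inl b') (Sum.inl b)
    have h4 := hdbar.2.2.2.1 b' b
    linarith
  linarith

lemma Ehat_throughM (a a' : M) (b : N) :
    dist a a' ≤ Ehat d dbar a b + Ehat d dbar a' b := by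
  have h1 : dist a a' - Ehat d dbar a b ≤ Ehat d dbar a' b := by
    refine le_ciInf fun w' => ?_
    have h2 : dist a a' - (d (Sum.inl a') (Sum.inr w') + dbar (Sum.inr w') (Sum.inl b))
        ≤ Ehat d dbar a b := by
      refine le_ciInf fun w => ?_
      have t1 := hd.2.2.1 (Sum.inl a) (Sum.inr w) (Sum.inl a')
      have t2 := hd.2.2.1 (Sum.inr w) (Sum.inr w') (Sum.inl a')
      have t3 := hd.2.2.2.1 a a'
      have t4 := hd.2.2.2.2 w w'
      have t5 := hdbar.2.2.2.2 w w'
      have t6 := hdbar.2.2.1 (Sum.inr w) (Sum.inl b) (Sum.inr w')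
      have t7 := hdbar.1 (Sum.inl b) (Sum.inr w')
      have t8 := hd.1 (Sum.inr w') (Sum.inl a')
      linarith
    linarith
  linarith

lemma Ehat_throughN (a : M) (b b' : N) :
    dist b b' ≤ Ehat d dbar a b + Ehat d dbar a b' := by
  have h1 : dist b b' - Ehat d dbar a b ≤ Ehat d dbar a b' := by
    refine le_ciInf fun w' => ?_
    have h2 : dist b b' - (d (Sum.inl a) (Sum.inr w') + dbar (Sum.inr w') (Sum.inl b'))
        ≤ Ehat d dbar a b := by
      refine le_ciInf fun w => ?_
      have t1 := hdbar.2.2.1 (Sum.inl b) (Sum.inr w) (Sum.inl b')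
      have t2 := hdbar.2.2.1 (Sum.inr w) (Sum.inr w') (Sum.inl b')
      have t3 := hdbar.2.2.2.1 b b'
      have t4 := hdbar.2.2.2.2 w w'
      have t5 := hd.2.2.2.2 w w'
      have t6 := hd.2.2.1 (Sum.inr w) (Sum.inl a) (Sum.inr w')
      have t7 := hd.1 (Sum.inl a) (Sum.inr w')
      have t8 := hd.1 (Sum.inr w) (Sum.inl a)
      have t9 := hdbar.1 (Sum.inl b) (Sum.inr w)
      have t10 := hdbar.1 (Sum.inr w') (Sum.inl b')
      linarith
    linarith
  linarith

lemma Dhat_admissible : Admissible (Dhat d dbar) := by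
  refine ⟨?_, ?_, ?_, fun a b => rfl, fun a b => rfl⟩
  · rintro (a | a) (b | b) <;> simp [Dhat, dist_comm]
  · rintro (a | a) <;> simp [Dhat]
  · rintro (a | a) (b | b) (c | c) <;> simp only [Dhat]
    · exact dist_triangle a b c
    · exact Ehat_shiftL hd hdbar a b c
    · exact Ehat_throughM hd hdbar a c b
    · exact Ehat_shiftR hd hdbar a c b
    · have h := Ehat_shiftL hd hdbar c b a
      rw [dist_comm b c]; linarith
    · exact Ehat_throughN hd hdbar b a c
    · have h := Ehat_shiftR hd hdbar c a b
      rw [dist_comm b a] at h; linarith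
    · exact dist_triangle a b c
end EhatProps

/-- Lemma 1(v) of the paper: if `[P,z]` is `r`-close to `[M,x]` and `s`-close to
`[N,y]` at scale `S = R + 2·max{r,s}`, then `[M,x]` and `[N,y]` are `(r+s)`-close
at scale `R`. -/
theorem glue_estimate (M N P : Type*) [MetricSpace M] [MetricSpace N] [MetricSpace P]
    (x : M) (y : N) (z : P) (R r s : ℝ) (hR : 0 < R) (hr : 0 < r) (hs : 0 < s)
    (S : ℝ) (hS : S = R + 2 * max r s)
    (d : M ⊕ P → M ⊕ P → ℝ) (hd : Admissible d)
    (hdxz : d (Sum.inl x) (Sum.inr z) < r) (hdH : HR d x z S < r)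
    (dbar : N ⊕ P → N ⊕ P → ℝ) (hdbar : Admissible dbar)
    (hdyz : dbar (Sum.inl y) (Sum.inr z) < s) (hdbarH : HR dbar y z S < s) :
    ∃ dhat : M ⊕ N → M ⊕ N → ℝ, Admissible dhat ∧
      dhat (Sum.inl x) (Sum.inr y) < r + s ∧ HR dhat x y R < r + s := by
  have hP : Nonempty P := ⟨z⟩
  have hM : Nonempty M := ⟨x⟩
  have hN : Nonempty N := ⟨y⟩
  have hmaxr : r ≤ max r s := le_max_left r s
  have hmaxs : s ≤ max r s := le_max_right r s
  refine ⟨Dhat d dbar, Dhat_admissible hd hdbar, ?_, ?_⟩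
  · -- dhat x y < r + s
    have h1 := Ehat_le hd hdbar x y z
    have h2 := hdbar.1 (Sum.inr z) (Sum.inl y)
    show Ehat d dbar x y < r + s
    linarith
  · -- HR estimate
    set r' : ℝ := max (HR d x z S) 0 with hr'def
    set s' : ℝ := max (HR dbar y z S) 0 with hs'def
    have hr' : r' < r := max_lt hdH hr
    have hs' : s' < s := max_lt hdbarH hs
    have hr'0 : 0 ≤ r' := le_max_right _ _
    have hs'0 : 0 ≤ s' := le_max_right _ _
    have key1 : ∀ u : M, u ∈ Metric.ball x R →
        (⨅ v : N, Ehat d dbar u v) ≤ r' + s' := by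
      intro u hu
      refine le_of_forall_pos_le_add fun ε hε => ?_
      set ε₁ : ℝ := min (ε / 2) (r - r') with hε₁def
      have hε₁pos : 0 < ε₁ := lt_min (by linarith) (by linarith)
      have hε₁le : ε₁ ≤ r - r' := min_le_right _ _
      have hε₁le2 : ε₁ ≤ ε / 2 := min_le_left _ _
      have huS : u ∈ Metric.ball x S := by
        have t := Metric.mem_ball.1 hu
        refine Metric.mem_ball.2 (by rw [hS]; linarith)
      have h1 : (⨅ w : P, d (Sum.inl u) (Sum.inr w)) < r' + ε₁ :=
        lt_of_le_of_lt ((lemA hd x z S u huS).trans (le_max_left (HR d x z S) 0)) (by linarith)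
      obtain ⟨w, hw⟩ := exists_lt_of_ciInf_lt h1
      have hwz : w ∈ Metric.ball z S := by
        have t1 := hd.2.2.1 (Sum.inr w) (Sum.inl u) (Sum.inr z)
        have t2 := hd.2.2.1 (Sum.inl u) (Sum.inl x) (Sum.inr z)
        have t3 := hd.2.2.2.1 u x
        have t4 := hd.2.2.2.2 w z
        have t5 := hd.1 (Sum.inr w) (Sum.inl u)
        have t6 : dist u x < R := Metric.mem_ball.1 hu
        refine Metric.mem_ball.2 ?_
        rw [← t4]; rw [hS]; linarith
      have h2 : (⨅ v : N, dbar (Sum.inr w) (Sum.inl v)) < s' + ε / 2 :=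
        lt_of_le_of_lt ((lemB hdbar y z S w hwz).trans (le_max_left (HR dbar y z S) 0)) (by linarith)
      obtain ⟨v, hv⟩ := exists_lt_of_ciInf_lt h2
      have h3 : (⨅ v : N, Ehat d dbar u v) ≤ Ehat d dbar u v :=
        ciInf_le (bdd_below_range fun v => Ehat_nonneg hd hdbar u v) v
      have h4 := Ehat_le hd hdbar u v w
      linarith
    have key2 : ∀ v : N, v ∈ Metric.ball y R →
        (⨅ u : M, Ehat d dbar u v) ≤ r' + s' := by
      intro v hv
      refine le_of_forall_pos_le_add fun ε hε => ?_
      set ε₁ : ℝ := min (ε / 2) (s - s') with hε₁def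
      have hε₁pos : 0 < ε₁ := lt_min (by linarith) (by linarith)
      have hε₁le : ε₁ ≤ s - s' := min_le_right _ _
      have hε₁le2 : ε₁ ≤ ε / 2 := min_le_left _ _
      have hvS : v ∈ Metric.ball y S := by
        have t := Metric.mem_ball.1 hv
        refine Metric.mem_ball.2 (by rw [hS]; linarith)
      have h1 : (⨅ w : P, dbar (Sum.inl v) (Sum.inr w)) < s' + ε₁ :=
        lt_of_le_of_lt ((lemA hdbar y z S v hvS).trans (le_max_left (HR dbar y z S) 0)) (by linarith)
      obtain ⟨w, hw⟩ := exists_lt_of_ciInf_lt h1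
      have hwz : w ∈ Metric.ball z S := by
        have t1 := hdbar.2.2.1 (Sum.inr w) (Sum.inl v) (Sum.inr z)
        have t2 := hdbar.2.2.1 (Sum.inl v) (Sum.inl y) (Sum.inr z)
        have t3 := hdbar.2.2.2.1 v y
        have t4 := hdbar.2.2.2.2 w z
        have t5 := hdbar.1 (Sum.inr w) (Sum.inl v)
        have t6 : dist v y < R := Metric.mem_ball.1 hv
        refine Metric.mem_ball.2 ?_
        rw [← t4]; rw [hS]; linarith
      have h2 : (⨅ u : M, d (Sum.inr w) (Sum.inl u)) < r' + ε / 2 :=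
        lt_of_le_of_lt ((lemB hd x z S w hwz).trans (le_max_left (HR d x z S) 0)) (by linarith)
      obtain ⟨u, hu⟩ := exists_lt_of_ciInf_lt h2
      have h3 : (⨅ u : M, Ehat d dbar u v) ≤ Ehat d dbar u v :=
        ciInf_le (bdd_below_range fun u => Ehat_nonneg hd hdbar u v) u
      have h4 := Ehat_le hd hdbar u v w
      have h5 := hd.1 (Sum.inr w) (Sum.inl u)
      have h6 := hdbar.1 (Sum.inl v) (Sum.inr w)
      linarith
    have hne1 : Nonempty (Metric.ball x R) := ⟨⟨x, Metric.mem_ball_self hR⟩⟩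
    have hne2 : Nonempty (Metric.ball y R) := ⟨⟨y, Metric.mem_ball_self hR⟩⟩
    have hC1 : (⨆ u : Metric.ball x R, ⨅ v : N,
        Dhat d dbar (Sum.inl (u : M)) (Sum.inr v)) ≤ r' + s' :=
      ciSup_le fun ⟨u, hu⟩ => key1 u hu
    have hC2 : (⨆ v : Metric.ball y R, ⨅ u : M,
        Dhat d dbar (Sum.inr (v : N)) (Sum.inl u)) ≤ r' + s' :=
      ciSup_le fun ⟨v, hv⟩ => key2 v hv
    have : HR (Dhat d dbar) x y R ≤ r' + s' := max_le hC1 hC2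
    linarith
end
end

section
/- Let x = (x_n)_{n≥2} and y = (y_n)_{n≥2} be sequences with x_n, y_n ∈ {1,…,n}, let n₀ ≥ 2, let R satisfy e² + ∑_{i=2}^{n₀} e^{i²} + e^{n₀} < R < e² + ∑_{i=2}^{n₀+1} e^{i²}, and let 0 < r < 1 be such that e^n + r < e^{(n+1)²} for 2 ≤ n ≤ n₀. If there is an admissible pseudometric d' on M_x ⊔ M_y with d'(P⁺_{x,2}, P⁺_{y,2}) < r and H_{d',R}(M_x, P⁺_{x,2}; M_y, P⁺_{y,2}) < r, then x_n = y_n for all 2 ≤ n ≤ n₀. -/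
noncomputable section

open TreePlane

theorem Pp_mem (x : ℕ → ℕ) : Pp x 2 ∈ Mset x :=
  Set.mem_iUnion₂.mpr ⟨2, Set.mem_setOf.mpr (le_refl 2), Or.inl rfl⟩

/-!
Seen from the base point `P⁺_{x,2}`, the points of the `n`-th fibre `M_{x,n}` (for `n ≥ 3`) lie at
distance `e^{x_n} + (∑_{i=3}^n e^{i²}) + e^{x_2}`, and these distances for consecutive `n` are
separated by gaps of size about `e^{(n+1)²}`. Every point of `M_x` at level `n ≤ n₀` lies in the
ball of radius `R`, so it has a partner in `M_y` at `d'`-distance `< r`; by the triangle inequality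
through the two base points, the partner's distance from `P⁺_{y,2}` differs by less than `2r < 2`.
The gaps force the partner to sit at the same level `n`, and then `|e^{y_n} - e^{x_n}| < 2` forces
`x_n = y_n` (once `x_2 = y_2`, which comes from the partner of `P⁻_{x,2}`).
-/

open Real

namespace TreePlane

lemma dist_mk_of_ne {u₁ u₂ : ℝ} (a b : ℝ) (h : u₁ ≠ u₂) :
    dist (⟨u₁, a⟩ : TreePlane) ⟨u₂, b⟩ = |a| + |u₁ - u₂| + |b| := by
  simp [dist_def, tdist, h]

lemma dist_mk_same (u a b : ℝ) : dist (⟨u, a⟩ : TreePlane) ⟨u, b⟩ = |a - b| := by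
  simp [dist_def, tdist]

end TreePlane

namespace Admissible

variable {α β : Type*} [MetricSpace α] [MetricSpace β] {d : α ⊕ β → α ⊕ β → ℝ}

lemma nonneg (hd : Admissible d) (a b : α ⊕ β) : 0 ≤ d a b := by
  obtain ⟨hsymm, hself, htri, -⟩ := hd
  linarith [htri a b a, hself a, hsymm a b]

lemma abs_dist_sub_dist_le (hd : Admissible d) (a a₀ : α) (b b₀ : β) :
    |dist b b₀ - dist a a₀| ≤ d (.inl a) (.inr b) + d (.inl a₀) (.inr b₀) := by
  obtain ⟨hsymm, -, htri, hα, hβ⟩ := hd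
  rw [← hα, ← hβ, abs_sub_le_iff]
  constructor
  · linarith [htri (.inr b) (.inl a) (.inr b₀), htri (.inl a) (.inl a₀) (.inr b₀),
      hsymm (.inr b) (.inl a)]
  · linarith [htri (.inl a) (.inr b) (.inl a₀), htri (.inr b) (.inr b₀) (.inl a₀),
      hsymm (.inr b₀) (.inl a₀)]

lemma exists_lt_of_HR_lt (hd : Admissible d) {x u : α} {y : β} {R r : ℝ}
    (h : HR d x y R < r) (hu : dist u x < R) : ∃ v, d (.inl u) (.inr v) < r := by
  have hbdd : BddAbove (Set.range fun u : Metric.ball x R => ⨅ v, d (.inl (u : α)) (.inr v)) := by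
    refine ⟨R + d (.inl x) (.inr y), ?_⟩
    rintro _ ⟨⟨u, hu⟩, rfl⟩
    calc ⨅ v, d (.inl u) (.inr v) ≤ d (.inl u) (.inr y) :=
          ciInf_le ⟨0, by rintro _ ⟨v, rfl⟩; exact hd.nonneg _ _⟩ y
      _ ≤ d (.inl u) (.inl x) + d (.inl x) (.inr y) := hd.2.2.1 _ _ _
      _ ≤ R + d (.inl x) (.inr y) := by
          rw [hd.2.2.2.1]; linarith [Metric.mem_ball.1 hu]
  have hinf : ⨅ v, d (.inl u) (.inr v) < r :=
    ((le_ciSup hbdd ⟨u, Metric.mem_ball.2 hu⟩).trans (le_max_left _ _)).trans_lt h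
  have : Nonempty β := ⟨y⟩
  exact exists_lt_of_ciInf_lt hinf

end Admissible

lemma exp_add_two_lt_exp {a b : ℕ} (ha : 1 ≤ a) (hab : a < b) : exp a + 2 < exp b := by
  have he : 2 < exp 1 := lt_trans (by norm_num) exp_one_gt_d9
  have h1 : exp 1 ≤ exp a := exp_le_exp.2 (by exact_mod_cast ha)
  have h2 : exp (a + 1) ≤ exp b := exp_le_exp.2 (by exact_mod_cast hab)
  rw [exp_add] at h2
  nlinarith

lemma eq_of_abs_exp_sub_exp_lt_two {a b : ℕ} (ha : 1 ≤ a) (hb : 1 ≤ b)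
    (h : |exp a - exp b| < 2) : a = b := by
  rw [abs_lt] at h
  rcases lt_trichotomy a b with hab | hab | hab
  · linarith [exp_add_two_lt_exp ha hab]
  · exact hab
  · linarith [exp_add_two_lt_exp hb hab]

lemma exp_add_exp_two_add_two_lt {k : ℝ} (hk : 2 ≤ k) :
    exp k + exp 2 + 2 < exp ((k + 1) ^ 2) := by
  have h7 : 8 ≤ exp 7 := by linarith [add_one_le_exp (7 : ℝ)]
  have h2 : exp 2 ≤ exp k := exp_le_exp.2 hk
  have hk7 : exp (k + 7) ≤ exp ((k + 1) ^ 2) := exp_le_exp.2 (by nlinarith)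
  rw [exp_add] at hk7
  nlinarith [add_one_le_exp (2 : ℝ)]

lemma expSum_mono : Monotone expSum := fun _ _ h =>
  Finset.sum_le_sum_of_subset_of_nonneg (Finset.Icc_subset_Icc_right h)
    fun _ _ _ => (exp_pos _).le

lemma expSum_succ {n : ℕ} (hn : 1 ≤ n) :
    expSum (n + 1) = expSum n + exp (((n : ℝ) + 1) ^ 2) := by
  rw [expSum, Finset.sum_Icc_succ_top (by omega)]
  push_cast
  rfl

lemma expSum_add_exp_sq_le {m n : ℕ} (hm : 1 ≤ m) (hmn : m < n) :
    expSum m + exp (((m : ℝ) + 1) ^ 2) ≤ expSum n :=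
  expSum_succ hm ▸ expSum_mono hmn

/-- The fibre `M_{x,n}`. -/
def Mlevel (x : ℕ → ℕ) (n : ℕ) : Set TreePlane := {Pp x n, Pm x n}

lemma mem_Mset_iff {x : ℕ → ℕ} {p : TreePlane} :
    p ∈ Mset x ↔ ∃ n, 2 ≤ n ∧ p ∈ Mlevel x n := by
  simp only [Mset, Mlevel, Set.mem_iUnion₂, Set.mem_ofPred_eq, exists_prop]

lemma dist_Pm_Pp (x : ℕ → ℕ) (n : ℕ) : dist (Pm x n) (Pp x n) = 2 * exp (x n) := by
  rw [Pm, Pp, dist_mk_same, show -exp (x n) - exp (x n) = -(2 * exp (x n)) by ring, abs_neg,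
    abs_of_pos (by positivity)]

lemma dist_Pp_two_of_mem_Mlevel {x : ℕ → ℕ} {n : ℕ} (hn : 3 ≤ n) {p : TreePlane}
    (hp : p ∈ Mlevel x n) : dist p (Pp x 2) = exp (x n) + (expSum n - expSum 2) + exp (x 2) := by
  have hlt : expSum 2 < expSum n :=
    (lt_add_of_pos_right _ (exp_pos _)).trans_le (expSum_add_exp_sq_le one_le_two hn)
  rcases hp with rfl | rfl <;>
    simp only [Pp, Pm, dist_mk_of_ne _ _ hlt.ne', abs_neg, abs_of_pos (exp_pos _),
      abs_of_pos (sub_pos.2 hlt)]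

lemma dist_Pp_two_mem_Icc {x : ℕ → ℕ} (hx : SeqOK x) {n : ℕ} (hn : 2 ≤ n) {p : TreePlane}
    (hp : p ∈ Mlevel x n) :
    dist p (Pp x 2) ∈ Set.Icc (expSum n - expSum 2) (expSum n - expSum 2 + exp n + exp 2) := by
  have hexp : ∀ k, 2 ≤ k → exp (x k) ≤ exp k := fun k hk =>
    exp_le_exp.2 (by exact_mod_cast (hx k hk).2)
  have hx2 : exp (x 2) ≤ exp 2 := by exact_mod_cast hexp 2 le_rfl
  rcases hn.eq_or_lt with rfl | h3
  · rcases hp with rfl | rfl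
    · simp only [dist_self, sub_self, Set.mem_Icc, le_refl, true_and]; positivity
    · rw [dist_Pm_Pp, Nat.cast_ofNat]; constructor <;> linarith [exp_pos (x 2 : ℝ)]
  · rw [dist_Pp_two_of_mem_Mlevel h3 hp]
    constructor <;> linarith [hexp n h3.le, exp_pos (x n : ℝ), exp_pos (x 2 : ℝ)]

lemma dist_Pp_two_add_two_lt {x y : ℕ → ℕ} (hx : SeqOK x) (hy : SeqOK y) {m n : ℕ} (hm : 2 ≤ m)
    (hmn : m < n) {p q : TreePlane} (hp : p ∈ Mlevel x m) (hq : q ∈ Mlevel y n) :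
    dist p (Pp x 2) + 2 < dist q (Pp y 2) := by
  have hpm := (dist_Pp_two_mem_Icc hx hm hp).2
  have hqn := (dist_Pp_two_mem_Icc hy (hm.trans hmn.le) hq).1
  have hgap := expSum_add_exp_sq_le (one_le_two.trans hm) hmn
  have hbig := exp_add_exp_two_add_two_lt (k := m) (by exact_mod_cast hm)
  linarith

lemma level_eq_of_abs_dist_sub_lt {x y : ℕ → ℕ} (hx : SeqOK x) (hy : SeqOK y) {m n : ℕ}
    (hm : 2 ≤ m) (hn : 2 ≤ n) {p q : TreePlane} (hp : p ∈ Mlevel x n) (hq : q ∈ Mlevel y m)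
    (h : |dist q (Pp y 2) - dist p (Pp x 2)| < 2) : m = n := by
  rw [abs_lt] at h
  rcases lt_trichotomy m n with hmn | hmn | hmn
  · linarith [dist_Pp_two_add_two_lt hy hx hm hmn hq hp]
  · exact hmn
  · linarith [dist_Pp_two_add_two_lt hx hy hn hmn hp hq]

lemma seq_two_eq_of_abs_dist_sub_lt {x y : ℕ → ℕ} (hx : SeqOK x) (hy : SeqOK y) {q : TreePlane}
    (hq : q ∈ Mlevel y 2) (h : |dist q (Pp y 2) - dist (Pm x 2) (Pp x 2)| < 2) : x 2 = y 2 := by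
  have hx1 : exp 1 ≤ exp (x 2) := exp_le_exp.2 (by exact_mod_cast (hx 2 le_rfl).1)
  have he : 2 < exp 1 := lt_trans (by norm_num) exp_one_gt_d9
  rw [dist_Pm_Pp, abs_lt] at h
  rcases hq with rfl | rfl
  · rw [dist_self] at h
    linarith
  · rw [dist_Pm_Pp] at h
    refine eq_of_abs_exp_sub_exp_lt_two (hx 2 le_rfl).1 (hy 2 le_rfl).1 (abs_lt.2 ⟨?_, ?_⟩) <;>
      linarith

lemma seq_eq_of_abs_dist_sub_lt {x y : ℕ → ℕ} (hx : SeqOK x) (hy : SeqOK y) (h₂ : x 2 = y 2)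
    {n : ℕ} (hn : 3 ≤ n) {p q : TreePlane} (hp : p ∈ Mlevel x n) (hq : q ∈ Mlevel y n)
    (h : |dist q (Pp y 2) - dist p (Pp x 2)| < 2) : x n = y n := by
  rw [dist_Pp_two_of_mem_Mlevel hn hp, dist_Pp_two_of_mem_Mlevel hn hq, h₂] at h
  refine eq_of_abs_exp_sub_exp_lt_two (hx n (by omega)).1 (hy n (by omega)).1 ?_
  rw [abs_sub_comm]
  convert h using 2
  ring

lemma dist_Pp_two_lt_of_mem_Mlevel {x : ℕ → ℕ} (hx : SeqOK x) {n n₀ : ℕ} (hn : 2 ≤ n)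
    (hnn₀ : n ≤ n₀) {R : ℝ} (hR : exp 2 + expSum n₀ + exp n₀ < R) {p : TreePlane}
    (hp : p ∈ Mlevel x n) : dist p (Pp x 2) < R := by
  have hexp : exp n ≤ exp n₀ := exp_le_exp.2 (by exact_mod_cast hnn₀)
  have hS2 : 0 ≤ expSum 2 := Finset.sum_nonneg fun _ _ => (exp_pos _).le
  linarith [(dist_Pp_two_mem_Icc hx hn hp).2, expSum_mono hnn₀]

theorem eq_up_to_n0_of_close_general (x y : ℕ → ℕ) (hx : SeqOK x) (hy : SeqOK y)
    (n₀ : ℕ) (R r : ℝ)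
    (hR1 : Real.exp 2 + (∑ i ∈ Finset.Icc 2 n₀, Real.exp ((i : ℝ) ^ 2)) +
      Real.exp (n₀ : ℝ) < R)
    (hr1 : r < 1)
    (d' : ↥(Mset x) ⊕ ↥(Mset y) → ↥(Mset x) ⊕ ↥(Mset y) → ℝ)
    (hadm : Admissible d')
    (hd1 : d' (Sum.inl ⟨Pp x 2, Pp_mem x⟩) (Sum.inr ⟨Pp y 2, Pp_mem y⟩) < r)
    (hd2 : HR d' ⟨Pp x 2, Pp_mem x⟩ ⟨Pp y 2, Pp_mem y⟩ R < r) :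
    ∀ n, 2 ≤ n → n ≤ n₀ → x n = y n := by
  have partner : ∀ n, 2 ≤ n → n ≤ n₀ → ∀ p ∈ Mlevel x n,
      ∃ q ∈ Mlevel y n, |dist q (Pp y 2) - dist p (Pp x 2)| < 2 := by
    intro n hn hnn₀ p hp
    have hpM : p ∈ Mset x := mem_Mset_iff.2 ⟨n, hn, hp⟩
    obtain ⟨⟨q, hqM⟩, hpq⟩ := hadm.exists_lt_of_HR_lt hd2 (u := ⟨p, hpM⟩)
      (dist_Pp_two_lt_of_mem_Mlevel hx hn hnn₀ hR1 hp)
    obtain ⟨m, hm, hq⟩ := mem_Mset_iff.1 hqM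
    have hclose : |dist q (Pp y 2) - dist p (Pp x 2)| < 2 := by
      have h := hadm.abs_dist_sub_dist_le ⟨p, hpM⟩ ⟨Pp x 2, Pp_mem x⟩ ⟨q, hqM⟩ ⟨Pp y 2, Pp_mem y⟩
      rw [Subtype.dist_eq, Subtype.dist_eq] at h
      linarith
    exact ⟨q, level_eq_of_abs_dist_sub_lt hx hy hm hn hp hq hclose ▸ hq, hclose⟩
  intro n hn hnn₀
  obtain ⟨q₂, hq₂, h₂⟩ := partner 2 le_rfl (hn.trans hnn₀) (Pm x 2) (Or.inr rfl)
  have hx₂ := seq_two_eq_of_abs_dist_sub_lt hx hy hq₂ h₂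
  rcases hn.eq_or_lt with rfl | h3
  · exact hx₂
  · obtain ⟨q, hq, h⟩ := partner n hn hnn₀ (Pp x n) (Or.inl rfl)
    exact seq_eq_of_abs_dist_sub_lt hx hy hx₂ h3 (Or.inl rfl) hq h

/-- If `(M_x, P⁺_{x,2})` and `(M_y, P⁺_{y,2})` admit an admissible pseudometric `d'`
on `M_x ⊔ M_y` with `d'(P⁺_{x,2}, P⁺_{y,2}) < r` and
`H_{d',R}(M_x, P⁺_{x,2}; M_y, P⁺_{y,2}) < r`, with `R` and `r` as stated, then
`x_n = y_n` for `2 ≤ n ≤ n₀`. -/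
theorem eq_up_to_n0_of_close (x y : ℕ → ℕ) (hx : SeqOK x) (hy : SeqOK y)
    (n₀ : ℕ) (hn₀ : 2 ≤ n₀) (R r : ℝ)
    (hR1 : Real.exp 2 + (∑ i ∈ Finset.Icc 2 n₀, Real.exp ((i : ℝ) ^ 2)) +
      Real.exp (n₀ : ℝ) < R)
    (hR2 : R < Real.exp 2 + ∑ i ∈ Finset.Icc 2 (n₀ + 1), Real.exp ((i : ℝ) ^ 2))
    (hr0 : 0 < r) (hr1 : r < 1)
    (hrn : ∀ n : ℕ, 2 ≤ n → n ≤ n₀ → Real.exp (n : ℝ) + r < Real.exp (((n : ℝ) + 1) ^ 2))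
    (d' : ↥(Mset x) ⊕ ↥(Mset y) → ↥(Mset x) ⊕ ↥(Mset y) → ℝ)
    (hadm : Admissible d')
    (hd1 : d' (Sum.inl ⟨Pp x 2, Pp_mem x⟩) (Sum.inr ⟨Pp y 2, Pp_mem y⟩) < r)
    (hd2 : HR d' ⟨Pp x 2, Pp_mem x⟩ ⟨Pp y 2, Pp_mem y⟩ R < r) :
    ∀ n, 2 ≤ n → n ≤ n₀ → x n = y n :=
  eq_up_to_n0_of_close_general x y hx hy n₀ R r hR1 hr1 d' hadm hd1 hd2
end
end

section
/- Let x = (x_n)_{n≥2} and y = (y_n)_{n≥2} be sequences with x_n, y_n ∈ {1,…,n}, and suppose there is C ≥ 0 with |x_n − y_n| ≤ C for all n ≥ 2. Then the Hausdorff distance between N_x and N_y, computed in the metric space (ℝ², d), is at most C. -/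
noncomputable section

open TreePlane

/-- `Q⁺_{x,n} = (∑_{i=2}^n e^{i²}, x_n)`. -/
def Qp (x : ℕ → ℕ) (n : ℕ) : TreePlane := ⟨expSum n, (x n : ℝ)⟩

/-- `Q⁻_{x,n} = (∑_{i=2}^n e^{i²}, −x_n)`. -/
def Qm (x : ℕ → ℕ) (n : ℕ) : TreePlane := ⟨expSum n, -(x n : ℝ)⟩

/-- `N_x = ⋃_{n≥2} {Q⁺_{x,n}, Q⁻_{x,n}}`, as a subset of `(ℝ², treeDist)`. -/
def Nset (x : ℕ → ℕ) : Set TreePlane :=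
  ⋃ n ∈ {m : ℕ | 2 ≤ m}, ({Qp x n, Qm x n} : Set TreePlane)

namespace TreePlane

theorem dist_eq_abs_sub_of_u_eq {p q : TreePlane} (h : p.u = q.u) : dist p q = |p.v - q.v| :=
  if_pos h

end TreePlane

theorem dist_Qp_Qp (a b : ℕ → ℕ) (n : ℕ) : dist (Qp a n) (Qp b n) = |(a n : ℝ) - b n| :=
  dist_eq_abs_sub_of_u_eq rfl

theorem dist_Qm_Qm (a b : ℕ → ℕ) (n : ℕ) : dist (Qm a n) (Qm b n) = |(a n : ℝ) - b n| := by
  rw [dist_eq_abs_sub_of_u_eq (p := Qm a n) (q := Qm b n) rfl, Qm, Qm, ← abs_neg, neg_sub_neg,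
    neg_sub]

theorem mem_Nset {a : ℕ → ℕ} {p : TreePlane} :
    p ∈ Nset a ↔ ∃ n, 2 ≤ n ∧ (p = Qp a n ∨ p = Qm a n) := by
  simp only [Nset, Set.mem_iUnion, Set.mem_ofPred_eq, Set.mem_insert_iff,
    Set.mem_singleton_iff, exists_prop]

/-- Each point of `N_a` is matched by the point of `N_b` on the same vertical line and the
same side of the axis. -/
theorem exists_mem_Nset_edist_le {a b : ℕ → ℕ} {C : ℝ}
    (hab : ∀ n, 2 ≤ n → |(a n : ℝ) - (b n : ℝ)| ≤ C) {p : TreePlane} (hp : p ∈ Nset a) :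
    ∃ q ∈ Nset b, edist p q ≤ ENNReal.ofReal C := by
  obtain ⟨n, hn, rfl | rfl⟩ := mem_Nset.mp hp
  · refine ⟨Qp b n, mem_Nset.mpr ⟨n, hn, Or.inl rfl⟩, ?_⟩
    rw [edist_dist, dist_Qp_Qp]
    exact ENNReal.ofReal_le_ofReal (hab n hn)
  · refine ⟨Qm b n, mem_Nset.mpr ⟨n, hn, Or.inr rfl⟩, ?_⟩
    rw [edist_dist, dist_Qm_Qm]
    exact ENNReal.ofReal_le_ofReal (hab n hn)

theorem hausdorffDist_le_of_bounded_diff_general (x y : ℕ → ℕ)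
    (C : ℝ) (h : ∀ n, 2 ≤ n → |(x n : ℝ) - (y n : ℝ)| ≤ C) :
    EMetric.hausdorffEdist (Nset x) (Nset y) ≤ ENNReal.ofReal C := by
  have h' : ∀ n, 2 ≤ n → |(y n : ℝ) - (x n : ℝ)| ≤ C := fun n hn =>
    abs_sub_comm (x n : ℝ) _ ▸ h n hn
  exact Metric.hausdorffEDist_le_of_mem_edist
    (fun _ hp => exists_mem_Nset_edist_le h hp) (fun _ hp => exists_mem_Nset_edist_le h' hp)

/-- If `|x_n − y_n| ≤ C` for all `n ≥ 2`, then the Hausdorff distance between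
`N_x` and `N_y`, computed in the metric space `(ℝ², treeDist)`, is at most `C`. -/
theorem hausdorffDist_le_of_bounded_diff (x y : ℕ → ℕ) (hx : SeqOK x) (hy : SeqOK y)
    (C : ℝ) (hC : 0 ≤ C) (h : ∀ n, 2 ≤ n → |(x n : ℝ) - (y n : ℝ)| ≤ C) :
    EMetric.hausdorffEdist (Nset x) (Nset y) ≤ ENNReal.ofReal C :=
  hausdorffDist_le_of_bounded_diff_general x y C h
end
end
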